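/- arXiv:2210.05926 — 2 statements merged into one kernel-verified Lean document; each statement's English description precedes it below -/
import Mathlib

section
/- If a sequence of functions (f_n) on a topological space X is almost additive with respect to a map T (i.e., there exists C > 0 such that -C + f_m(x) + f_n(T^m(x)) ≤ f_{m+n}(x) ≤ f_m(x) + f_n(T^m(x)) + C for all x and m,n ≥ 1), and each f_n is bounded, then (f_n) is asymptotically additive with respect to T: for each ε > 0 there exists a bounded function f : X → ℝ with limsup_{n→∞} (1/n)‖f_n − S_n f‖_∞ < ε, where S_n f = Σ_{k=0}^{n−1} f∘T^k. -/
open Filter Finset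

/-- Almost additive sequences of bounded functions are asymptotically additive. -/
theorem almostAdditive_asymptoticallyAdditive {X : Type*} (T : X → X) (f : ℕ → X → ℝ)
    (hbdd : ∀ n, ∃ M : ℝ, ∀ x, |f n x| ≤ M)
    (C : ℝ) (hC : 0 < C)
    (hAA : ∀ m n : ℕ, 1 ≤ m → 1 ≤ n → ∀ x : X,
      -C + f m x + f n (T^[m] x) ≤ f (m + n) x ∧
        f (m + n) x ≤ f m x + f n (T^[m] x) + C) :
    ∀ ε > (0 : ℝ), ∃ g : X → ℝ, (∃ M : ℝ, ∀ x, |g x| ≤ M) ∧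
      Filter.limsup
        (fun n : ℕ => (1 / (n : ℝ)) *
          ⨆ x, |f n x - ∑ k ∈ Finset.range n, g (T^[k] x)|) atTop < ε := by
  intro ε hε
  -- choose N with C / N < ε / 2
  obtain ⟨N₀, hN₀⟩ := exists_nat_gt (2 * C / ε)
  set N : ℕ := max N₀ 1 with hNdef
  have hN1 : 1 ≤ N := le_max_right _ _
  have hNpos : (0 : ℝ) < N := by exact_mod_cast hN1
  have hCN : C / N < ε / 2 := by
    rw [div_lt_iff₀ hNpos]
    have h1 : 2 * C / ε < (N : ℝ) := lt_of_lt_of_le hN₀ (by exact_mod_cast le_max_left N₀ 1)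
    rw [div_lt_iff₀ hε] at h1
    linarith
  -- a uniform bound M' for all f j with j ≤ N
  set M' : ℝ := ∑ j ∈ range (N + 1), |Classical.choose (hbdd j)| with hM'def
  have hM' : ∀ j ≤ N, ∀ x, |f j x| ≤ M' := by
    intro j hj x
    have h1 : |f j x| ≤ Classical.choose (hbdd j) := Classical.choose_spec (hbdd j) x
    have h2 : Classical.choose (hbdd j) ≤ |Classical.choose (hbdd j)| := le_abs_self _
    have h3 : |Classical.choose (hbdd j)| ≤ M' := by
      apply Finset.single_le_sum (f := fun j => |Classical.choose (hbdd j)|)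
        (fun i _ => abs_nonneg _)
      simp [Nat.lt_succ_iff, hj]
    linarith
  have hM'0 : 0 ≤ M' := Finset.sum_nonneg fun i _ => abs_nonneg _
  set g : X → ℝ := fun x => f N x / N with hgdef
  refine ⟨g, ⟨M', fun x => ?_⟩, ?_⟩
  · have := hM' N le_rfl x
    rw [abs_div, abs_of_pos hNpos]
    calc |f N x| / N ≤ M' / N := by gcongr
      _ ≤ M' := div_le_self hM'0 (by exact_mod_cast hN1)
  set K₀ : ℝ := N * C + 2 * N * M' + M' with hK₀def
  have hK₀0 : 0 ≤ K₀ := by positivity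
  -- the key pointwise estimate
  have hkey : ∀ n : ℕ, N + 2 ≤ n → ∀ x : X,
      |f n x - ∑ k ∈ range n, g (T^[k] x)| ≤ (((n : ℝ) - 1) * C + K₀) / N := by
    intro n hn x
    have hn1 : 1 ≤ n := le_trans (by omega) hn
    have hnR1 : (1 : ℝ) ≤ n := by exact_mod_cast hn1
    -- reduce to estimate times N
    have hsum : ∑ k ∈ range n, g (T^[k] x) = (∑ k ∈ range n, f N (T^[k] x)) / N := by
      rw [Finset.sum_div]
    rw [hsum]
    have key : |(N : ℝ) * f n x - ∑ k ∈ range n, f N (T^[k] x)| ≤ ((n : ℝ) - 1) * C + K₀ := by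
      -- split off k = 0
      have hsplit : ∑ k ∈ range n, f N (T^[k] x)
          = f N x + ∑ k ∈ Ico 1 n, f N (T^[k] x) := by
        rw [Finset.range_eq_Ico, Finset.sum_eq_sum_Ico_succ_bot (by omega) ]
        simp
      -- step A: telescoping estimate
      have hA : |(∑ k ∈ Ico 1 n, f N (T^[k] x))
          - (∑ k ∈ Ico 1 n, (f (k + N) x - f k x))| ≤ ((n : ℝ) - 1) * C := by
        rw [← Finset.sum_sub_distrib]
        calc |∑ k ∈ Ico 1 n, (f N (T^[k] x) - (f (k + N) x - f k x))|
            ≤ ∑ k ∈ Ico 1 n, |f N (T^[k] x) - (f (k + N) x - f k x)| :=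
              Finset.abs_sum_le_sum_abs _ _
          _ ≤ ∑ k ∈ Ico 1 n, C := by
              apply Finset.sum_le_sum
              intro k hk
              obtain ⟨h1, h2⟩ := hAA k N (Finset.mem_Ico.mp hk).1 hN1 x
              rw [abs_le]
              constructor <;> linarith
          _ = ((n : ℝ) - 1) * C := by
              rw [Finset.sum_const, Nat.card_Ico, nsmul_eq_mul, Nat.cast_sub hn1, Nat.cast_one]
      -- rewrite the telescoping sum
      have hRe : ∑ k ∈ Ico 1 n, (f (k + N) x - f k x)
          = (∑ k ∈ Ico n (n + N), f k x) - ∑ k ∈ Ico 1 (1 + N), f k x := by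
        rw [Finset.sum_sub_distrib]
        have e1 : ∑ k ∈ Ico 1 n, f (k + N) x = ∑ k ∈ Ico (1 + N) (n + N), f k x :=
          Finset.sum_Ico_add' (fun k => f k x) 1 n N
        have e2 : (∑ k ∈ Ico 1 (1 + N), f k x) + ∑ k ∈ Ico (1 + N) (n + N), f k x
            = ∑ k ∈ Ico 1 (n + N), f k x :=
          Finset.sum_Ico_consecutive _ (by omega) (by omega)
        have e3 : (∑ k ∈ Ico 1 n, f k x) + ∑ k ∈ Ico n (n + N), f k x
            = ∑ k ∈ Ico 1 (n + N), f k x :=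
          Finset.sum_Ico_consecutive _ (by omega) (by omega)
        rw [e1]
        linarith
      -- step B: the block of N consecutive values is close to N * f n x
      have hB : |(∑ k ∈ Ico n (n + N), f k x) - (N : ℝ) * f n x| ≤ N * (C + M') := by
        have hcard : n + N - n = N := by omega
        have hNf : (N : ℝ) * f n x = ∑ _k ∈ Ico n (n + N), f n x := by
          rw [Finset.sum_const, Nat.card_Ico, hcard, nsmul_eq_mul]
        rw [hNf, ← Finset.sum_sub_distrib]
        calc |∑ k ∈ Ico n (n + N), (f k x - f n x)|
            ≤ ∑ k ∈ Ico n (n + N), |f k x - f n x| := Finset.abs_sum_le_sum_abs _ _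
          _ ≤ ∑ _k ∈ Ico n (n + N), (C + M') := by
              apply Finset.sum_le_sum
              intro k hk
              obtain ⟨hk1, hk2⟩ := Finset.mem_Ico.mp hk
              rcases eq_or_lt_of_le hk1 with h | h
              · rw [← h]
                simp
                positivity
              · set j : ℕ := k - n with hjdef
                have hj1 : 1 ≤ j := by omega
                have hjN : j ≤ N := by omega
                have hkj : k = n + j := by omega
                obtain ⟨h1, h2⟩ := hAA n j hn1 hj1 x
                have hfj : |f j (T^[n] x)| ≤ M' := hM' j hjN _
                rw [hkj, abs_le]
                rw [abs_le] at hfj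
                constructor <;> linarith
          _ = N * (C + M') := by
              rw [Finset.sum_const, Nat.card_Ico, hcard, nsmul_eq_mul]
      -- step C
      have hCs : |∑ k ∈ Ico 1 (1 + N), f k x| ≤ N * M' := by
        calc |∑ k ∈ Ico 1 (1 + N), f k x| ≤ ∑ k ∈ Ico 1 (1 + N), |f k x| :=
            Finset.abs_sum_le_sum_abs _ _
          _ ≤ ∑ _k ∈ Ico 1 (1 + N), M' := by
              apply Finset.sum_le_sum
              intro k hk
              obtain ⟨hk1, hk2⟩ := Finset.mem_Ico.mp hk
              exact hM' k (by omega) x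
          _ = N * M' := by
              have hcard2 : 1 + N - 1 = N := by omega
              rw [Finset.sum_const, Nat.card_Ico, hcard2, nsmul_eq_mul]
      -- step D
      have hD : |f N x| ≤ M' := hM' N le_rfl x
      rw [hsplit]
      rw [hRe] at hA
      rw [abs_le] at hA hB hCs hD ⊢
      simp only [hK₀def]
      constructor <;>
        linarith [hA.1, hA.2, hB.1, hB.2, hCs.1, hCs.2, hD.1, hD.2]
    have : f n x - (∑ k ∈ range n, f N (T^[k] x)) / N
        = ((N : ℝ) * f n x - ∑ k ∈ range n, f N (T^[k] x)) / N := by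
      field_simp
    rw [this, abs_div, abs_of_pos hNpos]
    gcongr
  -- limsup part
  obtain ⟨n₁, hn₁⟩ := exists_nat_gt (4 * K₀ / (N * ε))
  have hub : ∀ᶠ n : ℕ in atTop,
      (1 / (n : ℝ)) * (⨆ x, |f n x - ∑ k ∈ Finset.range n, g (T^[k] x)|)
        ≤ C / N + ε / 4 := by
    filter_upwards [eventually_ge_atTop (max (N + 2) (n₁ + 1))] with n hn
    have hn2 : N + 2 ≤ n := le_trans (le_max_left _ _) hn
    have hn3 : n₁ + 1 ≤ n := le_trans (le_max_right _ _) hn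
    have hnpos : (0 : ℝ) < n := by
      have : 0 < n := by omega
      exact_mod_cast this
    have hnR1 : (1 : ℝ) ≤ n := by
      have : 1 ≤ n := by omega
      exact_mod_cast this
    have hbound : (⨆ x, |f n x - ∑ k ∈ range n, g (T^[k] x)|)
        ≤ (((n : ℝ) - 1) * C + K₀) / N :=
      Real.iSup_le (hkey n hn2 ) (div_nonneg (by nlinarith) hNpos.le)
    have h1 : (1 / (n : ℝ)) * (⨆ x, |f n x - ∑ k ∈ range n, g (T^[k] x)|)
        ≤ (1 / (n : ℝ)) * ((((n : ℝ) - 1) * C + K₀) / N) :=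
      mul_le_mul_of_nonneg_left hbound (by positivity)
    have hK : K₀ / ((N : ℝ) * n) ≤ ε / 4 := by
      have hn₁n : 4 * K₀ / ((N : ℝ) * ε) < n := by
        have : (n₁ : ℝ) < n := by
          have : n₁ < n := by omega
          exact_mod_cast this
        linarith
      rw [div_lt_iff₀ (by positivity)] at hn₁n
      rw [div_le_iff₀ (by positivity)]
      nlinarith
    have h2 : (1 / (n : ℝ)) * ((((n : ℝ) - 1) * C + K₀) / N)
        = (((n : ℝ) - 1) / n) * (C / N) + K₀ / ((N : ℝ) * n) := by
      field_simp
    have h3 : (((n : ℝ) - 1) / n) * (C / N) ≤ 1 * (C / N) := by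
      apply mul_le_mul_of_nonneg_right _ (by positivity)
      rw [div_le_one hnpos]
      linarith
    calc (1 / (n : ℝ)) * (⨆ x, |f n x - ∑ k ∈ range n, g (T^[k] x)|)
        ≤ (1 / (n : ℝ)) * ((((n : ℝ) - 1) * C + K₀) / N) := h1
      _ = (((n : ℝ) - 1) / n) * (C / N) + K₀ / ((N : ℝ) * n) := h2
      _ ≤ 1 * (C / N) + ε / 4 := add_le_add h3 hK
      _ = C / N + ε / 4 := by ring
  have hcob : IsCoboundedUnder (· ≤ ·) atTop
      (fun n : ℕ => (1 / (n : ℝ)) * ⨆ x, |f n x - ∑ k ∈ Finset.range n, g (T^[k] x)|) :=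
    isCoboundedUnder_le_of_le atTop (x := 0) fun n =>
      mul_nonneg (by positivity) (Real.iSup_nonneg fun x => abs_nonneg _)
  exact lt_of_le_of_lt (limsup_le_of_le hcob hub) (by linarith)
end

section
/- Let Φ be a continuous flow on a compact metric space X and x* ∈ X a point that is not fixed by Φ. Then there is no bounded measurable function b : X → ℝ such that ∫_0^1 b(φ_s(x)) ds equals the indicator function of {x*} evaluated at x, for all x ∈ X. -/
open MeasureTheory

/-- For a continuous flow on a compact metric space and a non-fixed point `x*`,
no bounded measurable function `b` satisfies `∫_0^1 b(φ_s(x)) ds = 𝟙_{x*}(x)`. -/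
theorem no_embedding_indicator {X : Type*} [MetricSpace X] [CompactSpace X]
    [MeasurableSpace X] [BorelSpace X]
    (Φ : ℝ → X → X) (hΦ : Continuous fun p : ℝ × X => Φ p.1 p.2)
    (h0 : ∀ x, Φ 0 x = x) (hadd : ∀ s t : ℝ, ∀ x, Φ (s + t) x = Φ s (Φ t x))
    (xstar : X) (hx : ∃ t : ℝ, Φ t xstar ≠ xstar) :
    ¬ ∃ b : X → ℝ, Measurable b ∧ (∃ M : ℝ, ∀ x, |b x| ≤ M) ∧
      ∀ x, (∫ s in (0:ℝ)..1, b (Φ s x))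
        = Set.indicator {xstar} (fun _ => (1 : ℝ)) x := by
  rintro ⟨b, hmeas, ⟨M, hM⟩, heq⟩
  set g : ℝ → ℝ := fun s => b (Φ s xstar) with hg
  have hcflow : Continuous fun s : ℝ => Φ s xstar :=
    hΦ.comp (continuous_id.prodMk continuous_const)
  have hgm : Measurable g := hmeas.comp hcflow.measurable
  have hint : ∀ a c : ℝ, IntervalIntegrable g volume a c := by
    intro a c
    rw [intervalIntegrable_iff]
    apply Measure.integrableOn_of_bounded (M := M)
    · exact (measure_Ioc_lt_top).ne
    · exact hgm.aestronglyMeasurable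
    · exact Filter.Eventually.of_forall fun s => by
        simpa [Real.norm_eq_abs] using hM (Φ s xstar)
  have hprim : Continuous fun t : ℝ => ∫ s in (0:ℝ)..t, g s :=
    intervalIntegral.continuous_primitive (fun a c => hint a c) 0
  set F : ℝ → ℝ := fun t => ∫ s in t..(1 + t), g s with hF
  have hFcont : Continuous F := by
    have : ∀ t : ℝ, F t = (∫ s in (0:ℝ)..(1 + t), g s) - ∫ s in (0:ℝ)..t, g s := by
      intro t
      rw [intervalIntegral.integral_interval_sub_left (hint 0 (1 + t)) (hint 0 t)]
    rw [funext this]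
    exact (hprim.comp (continuous_const.add continuous_id)).sub hprim
  have hFval : ∀ t : ℝ, F t = Set.indicator {xstar} (fun _ => (1 : ℝ)) (Φ t xstar) := by
    intro t
    have := heq (Φ t xstar)
    rw [← this]
    have h1 : ∀ s : ℝ, b (Φ s (Φ t xstar)) = g (s + t) := by
      intro s; rw [hg]; simp [← hadd]
    simp only [h1]
    simp only [hF]
    rw [intervalIntegral.integral_comp_add_right g t, zero_add]
  have hF0 : F 0 = 1 := by
    rw [hFval 0, h0]
    simp
  -- continuity at 0: eventually F t > 1/2, hence Φ t xstar = xstar near 0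
  have hat : ContinuousAt F 0 := hFcont.continuousAt
  rw [Metric.continuousAt_iff] at hat
  obtain ⟨δ, hδ, hball⟩ := hat (1/2) (by norm_num)
  have hfix : ∀ t : ℝ, |t| < δ → Φ t xstar = xstar := by
    intro t ht
    by_contra hne
    have : F t = 0 := by
      rw [hFval t, Set.indicator_of_notMem]
      simpa using hne
    have h2 := hball (by simpa [Real.dist_eq] using ht)
    rw [this, hF0] at h2
    norm_num [Real.dist_eq] at h2
  have key : ∀ (n : ℕ) (c : ℝ), Φ c xstar = xstar → Φ ((n : ℝ) * c) xstar = xstar := by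
    intro n c hc
    induction n with
    | zero => simp [h0]
    | succ n ih =>
      push_cast
      rw [add_mul, one_mul, hadd, hc, ih]
  obtain ⟨t, ht⟩ := hx
  obtain ⟨n, hn⟩ := exists_nat_gt (|t| / δ)
  have hn0 : 0 < (n : ℝ) := lt_of_le_of_lt (div_nonneg (abs_nonneg t) hδ.le) hn
  have hsmall : |t / n| < δ := by
    rw [abs_div, abs_of_pos hn0, div_lt_iff₀ hn0]
    calc |t| = |t| / δ * δ := by field_simp
    _ < n * δ := by exact mul_lt_mul_of_pos_right hn hδ
    _ = δ * n := mul_comm _ _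
  have := key n (t / n) (hfix _ hsmall)
  rw [mul_div_cancel₀ t hn0.ne'] at this
  exact ht this
end
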